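/- Let n ≥ 1, let r > 0, and let P := { z ∈ ℂⁿ : |z_k| < r for all k } be the open polydisc of polyradius r centered at the origin (the open ball of radius r for the supremum norm on Fin n → ℂ). Let f : ℂⁿ → ℂ be analytic on P and let i be a fixed index such that f(z) = 0 for every z ∈ P with z_i = 0. Then there exists a function g : ℂⁿ → ℂ analytic on P such that f(z) = z_i · g(z) for all z ∈ P. -/

import Mathlib

/-!
Near a point `p` of the hyperplane `z i = 0` write `f (p + y) = ∑ₘ Fₘ (y, …, y)` and let `π` be
the projection `y ↦ y - y i • eᵢ` onto the hyperplane. As `f` vanishes on the hyperplane,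
`f (p + y) = ∑ₘ (Fₘ (y, …, y) - Fₘ (π y, …, π y))`. Telescoping each difference one slot at a
time and using `y - π y = y i • eᵢ` writes every term as `y i` times an `(m - 1)`-linear
expression of norm at most `m ‖Fₘ‖ max ‖π‖ 1 ^ m ‖eᵢ‖`; these form a power series of positive
radius, the local quotient. Globally, `g z = dslope (w ↦ f (update z i w)) 0 (z i)` is `f z / z i`
off the hyperplane and `∂f/∂zᵢ` on it, and near every point it agrees with a local quotient.
-/

open scoped NNReal Topology
open Filter Function Set

variable {𝕜 E F : Type*} [NontriviallyNormedField 𝕜] [NormedAddCommGroup E] [NormedSpace 𝕜 E]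
  [NormedAddCommGroup F] [NormedSpace 𝕜 F]

namespace FormalMultilinearSeries

/-- The `k`-th summand is the `k`-th step of telescoping `p (m + 1)` from `(y, …, y)` to
`(π y, …, π y)`, with the difference `y - π y` in slot `k` replaced by `e`. -/
noncomputable def diffQuot (p : FormalMultilinearSeries 𝕜 E F) (π : E →L[𝕜] E) (e : E) :
    FormalMultilinearSeries 𝕜 E F := fun m =>
  ∑ k : Fin (m + 1),
    ((p (m + 1)).compContinuousLinearMap
      fun j => if k < j then π else ContinuousLinearMap.id 𝕜 E).curryMid k e

variable (p : FormalMultilinearSeries 𝕜 E F) (π : E →L[𝕜] E) (e : E)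

theorem smul_diffQuot_apply {y : E} {c : 𝕜} (h : y - π y = c • e) (m : ℕ) :
    c • p.diffQuot π e m (fun _ => y) = p (m + 1) (fun _ => y) - p (m + 1) (fun _ => π y) := by
  classical
  have telescope := (p (m + 1)).toMultilinearMap.map_sub_map_piecewise
    (fun _ => y) (fun _ => π y) Finset.univ
  simp only [Finset.piecewise_univ, ContinuousMultilinearMap.coe_coe, Finset.mem_univ,
    true_implies] at telescope
  rw [telescope, diffQuot, sum_apply, Finset.smul_sum]
  refine Finset.sum_congr rfl fun k _ => ?_
  have hins : Fin.insertNth k e (fun _ : Fin m => y) = update (fun _ => y) k e :=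
    Fin.insertNth_removeNth k e (fun _ => y)
  set v : Fin (m + 1) → E := fun j => if k < j then π y else y
  have hterm :
      (fun j => if j < k then y else if k = j then c • e else π y) = update v k (c • e) := by
    ext j
    rcases lt_trichotomy j k with hjk | rfl | hjk
    · simp [v, hjk, hjk.ne, hjk.not_gt]
    · simp
    · simp [v, hjk, hjk.ne, hjk.ne', hjk.not_gt]
  have hcomp : (fun j => (if k < j then π else ContinuousLinearMap.id 𝕜 E)
      (Fin.insertNth (α := fun _ => E) k e (fun _ => y) j)) = update v k e := by
    ext j
    rcases eq_or_ne j k with rfl | hjk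
    · simp
    · by_cases hkj : k < j <;> simp [v, hins, hjk, hkj]
  rw [ContinuousMultilinearMap.curryMid_apply,
    ContinuousMultilinearMap.compContinuousLinearMap_apply, hcomp, h, hterm,
    ContinuousMultilinearMap.map_update_smul]

theorem norm_diffQuot_le (m : ℕ) :
    ‖p.diffQuot π e m‖ ≤ (m + 1) * (‖p (m + 1)‖ * max ‖π‖ 1 ^ (m + 1) * ‖e‖) := by
  have hL : ∀ k j : Fin (m + 1),
      ‖if k < j then π else ContinuousLinearMap.id 𝕜 E‖ ≤ max ‖π‖ 1 := fun k j => by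
    split_ifs
    · exact le_max_left _ _
    · exact (ContinuousLinearMap.norm_id_le).trans (le_max_right _ _)
  have hterm : ∀ k : Fin (m + 1), ‖((p (m + 1)).compContinuousLinearMap
      fun j => if k < j then π else ContinuousLinearMap.id 𝕜 E).curryMid k e‖ ≤
        ‖p (m + 1)‖ * max ‖π‖ 1 ^ (m + 1) * ‖e‖ := fun k =>
    calc _ ≤ ‖(p (m + 1)).compContinuousLinearMap
          fun j => if k < j then π else ContinuousLinearMap.id 𝕜 E‖ * ‖e‖ := by
          grw [ContinuousLinearMap.le_opNorm, ContinuousMultilinearMap.norm_curryMid]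
      _ ≤ ‖p (m + 1)‖ * max ‖π‖ 1 ^ (m + 1) * ‖e‖ := by
          gcongr
          refine (ContinuousMultilinearMap.norm_compContinuousLinearMap_le _ _).trans ?_
          gcongr
          simpa using Finset.prod_le_prod (s := Finset.univ) (fun j _ => norm_nonneg _)
            fun j _ => hL k j
  calc ‖p.diffQuot π e m‖ ≤ ∑ k : Fin (m + 1), ‖p (m + 1)‖ * max ‖π‖ 1 ^ (m + 1) * ‖e‖ :=
        (norm_sum_le _ _).trans (Finset.sum_le_sum fun k _ => hterm k)
    _ = _ := by simp

theorem radius_diffQuot_pos (hp : 0 < p.radius) : 0 < (p.diffQuot π e).radius := by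
  obtain ⟨r, hr0, hrp⟩ := ENNReal.lt_iff_exists_nnreal_btwn.1 hp
  obtain ⟨C, -, hC⟩ := p.norm_mul_pow_le_of_lt_radius hrp
  have hr : (0 : ℝ) < r := mod_cast hr0
  set K : ℝ≥0 := max ‖π‖₊ 1
  have hK : 0 < K := one_pos.trans_le (le_max_right _ _)
  -- `K` absorbs the factors `π` and `2` absorbs the `m + 1` summands of each coefficient.
  refine lt_of_lt_of_le ?_ ((p.diffQuot π e).le_radius_of_bound (r := r / (2 * K))
    (2 * (K * ‖e‖) * (C / r)) fun m => ?_)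
  · exact ENNReal.coe_pos.2 (div_pos (ENNReal.coe_pos.1 hr0) (by positivity))
  have hcoeff : ‖p (m + 1)‖ * (r : ℝ) ^ m ≤ C / r := by
    rw [le_div_iff₀ hr, mul_assoc, ← pow_succ]
    exact hC (m + 1)
  have hgeom : ((m : ℝ) + 1) / 2 ^ m ≤ 2 := by
    rw [div_le_iff₀ (by positivity), ← pow_succ']
    exact_mod_cast (Nat.lt_two_pow_self (n := m + 1)).le
  calc ‖p.diffQuot π e m‖ * ((r / (2 * K) : ℝ≥0) : ℝ) ^ m
      ≤ (m + 1) * (‖p (m + 1)‖ * (K : ℝ) ^ (m + 1) * ‖e‖) * ((r : ℝ) / (2 * K)) ^ m := by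
        push_cast
        gcongr
        exact p.norm_diffQuot_le π e m
    _ = ((m + 1) / 2 ^ m) * (K * ‖e‖) * (‖p (m + 1)‖ * (r : ℝ) ^ m) := by
        rw [div_pow, mul_pow]
        field_simp
        ring
    _ ≤ 2 * (K * ‖e‖) * (C / r) := by gcongr

end FormalMultilinearSeries

theorem HasFPowerSeriesAt.eventually_eq_smul_sum_diffQuot [CompleteSpace F] {f : E → F}
    {p : FormalMultilinearSeries 𝕜 E F} {x : E} (hf : HasFPowerSeriesAt f p x)
    {ℓ : E →L[𝕜] 𝕜} {e : E} (he : ℓ e = 1) (hvanish : ∀ᶠ z in 𝓝 x, ℓ (z - x) = 0 → f z = 0) :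
    ∀ᶠ y in 𝓝 0,
      f (x + y) = ℓ y • (p.diffQuot (ContinuousLinearMap.id 𝕜 E - ℓ.smulRight e) e).sum y := by
  set π := ContinuousLinearMap.id 𝕜 E - ℓ.smulRight e
  have hπ : ∀ y, y - π y = ℓ y • e := fun y => by simp [π]
  have hπ_tendsto : Tendsto (fun y => x + π y) (𝓝 0) (𝓝 x) := by
    have hcont : Continuous fun y => x + π y := by fun_prop
    simpa using hcont.tendsto 0
  have hsum_π : ∀ᶠ y in 𝓝 0, HasSum (fun n => p n fun _ => π y) (f (x + π y)) :=
    (π.continuous.tendsto' 0 0 (map_zero π)).eventually hf.eventually_hasSum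
  have hvanish_π : ∀ᶠ y in 𝓝 0, f (x + π y) = 0 :=
    hπ_tendsto.eventually hvanish |>.mono fun y hy => hy (by simp [π, he])
  filter_upwards [hf.eventually_hasSum, hsum_π, hvanish_π,
    Metric.eball_mem_nhds 0 (p.radius_diffQuot_pos π e hf.radius_pos)]
    with y hy hyπ hyπ0 hyG
  rw [hyπ0] at hyπ
  have h0 : (fun _ : Fin 0 => y) = fun _ => π y := Subsingleton.elim _ _
  have hshift := (hasSum_nat_add_iff' 1).2 (hy.sub hyπ)
  simp only [Finset.sum_range_one, h0, sub_self, sub_zero] at hshift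
  simp_rw [← p.smul_diffQuot_apply π e (hπ y)] at hshift
  exact hshift.unique ((FormalMultilinearSeries.hasSum _ hyG).const_smul (ℓ y))

theorem AnalyticAt.exists_analyticAt_eventually_eq_smul [CompleteSpace F] {f : E → F} {x : E}
    (hf : AnalyticAt 𝕜 f x) {ℓ : E →L[𝕜] 𝕜} {e : E} (he : ℓ e = 1)
    (hvanish : ∀ᶠ z in 𝓝 x, ℓ (z - x) = 0 → f z = 0) :
    ∃ g : E → F, AnalyticAt 𝕜 g x ∧ ∀ᶠ z in 𝓝 x, f z = ℓ (z - x) • g z := by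
  obtain ⟨p, hp⟩ := hf
  set G := p.diffQuot (ContinuousLinearMap.id 𝕜 E - ℓ.smulRight e) e
  have hG : AnalyticAt 𝕜 G.sum (x - x) := by
    rw [sub_self]
    exact (G.hasFPowerSeriesOnBall (p.radius_diffQuot_pos _ e hp.radius_pos)).analyticAt
  refine ⟨fun z => G.sum (z - x), hG.comp (f := fun z => z - x) (by fun_prop), ?_⟩
  have hsub : Tendsto (fun z => z - x) (𝓝 x) (𝓝 0) := tendsto_sub_nhds_zero_iff.2 tendsto_id
  filter_upwards [hsub.eventually (hp.eventually_eq_smul_sum_diffQuot he hvanish)] with z hz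
  rwa [add_sub_cancel] at hz

theorem dslope_eq_of_eqOn_sub_smul {φ ψ : 𝕜 → F} {s : Set 𝕜} {a b : 𝕜} (hs : s ∈ 𝓝 a)
    (hb : b ∈ s) (hψ : DifferentiableAt 𝕜 ψ a) (h : EqOn φ (fun w => (w - a) • ψ w) s) :
    dslope φ a b = ψ b := by
  rcases eq_or_ne b a with rfl | hba
  · have hderiv : HasDerivAt (fun w => (w - b) • ψ w) (ψ b) b := by
      have h := ((hasDerivAt_id b).sub_const b).smul hψ.hasDerivAt
      simp only [id, sub_self, zero_smul, one_smul, zero_add] at h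
      exact h
    rw [dslope_same, (h.eventuallyEq_of_mem hs).deriv_eq, hderiv.deriv]
  · rw [dslope_of_ne _ hba, slope_def_module, h hb, h (mem_of_mem_nhds hs)]
    simp [smul_smul, inv_mul_cancel₀ (sub_ne_zero.2 hba)]

theorem eventuallyEq_dslope_update {ι : Type*} [Fintype ι] [DecidableEq ι]
    {f g : (ι → 𝕜) → F} {p : ι → 𝕜} {i : ι} (hpi : p i = 0)
    (hg : ∀ᶠ z in 𝓝 p, DifferentiableAt 𝕜 g z) (hfg : ∀ᶠ z in 𝓝 p, f z = z i • g z) :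
    (fun z => dslope (fun w => f (update z i w)) 0 (z i)) =ᶠ[𝓝 p] g := by
  have hupdate : Tendsto (fun q : (ι → 𝕜) × 𝕜 => update q.1 i q.2) (𝓝 (p, 0)) (𝓝 p) := by
    simpa [← hpi] using (continuous_update i).tendsto (p, 0)
  obtain ⟨V, hV, s, hs, hVs⟩ := mem_nhds_prod_iff.1 (hupdate.eventually (hg.and hfg))
  have hcoord : Tendsto (fun z : ι → 𝕜 => z i) (𝓝 p) (𝓝 0) :=
    hpi ▸ (continuous_apply i).tendsto p
  filter_upwards [hV, hcoord.eventually hs] with z hzV hzs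
  have hline : ∀ w ∈ s, DifferentiableAt 𝕜 g (update z i w) ∧
      f (update z i w) = (update z i w) i • g (update z i w) :=
    fun w hw => hVs (mk_mem_prod hzV hw)
  calc dslope (fun w => f (update z i w)) 0 (z i) = g (update z i (z i)) :=
        dslope_eq_of_eqOn_sub_smul (ψ := fun w => g (update z i w)) hs hzs
          ((hline 0 (mem_of_mem_nhds hs)).1.comp 0 (hasFDerivAt_update z 0).differentiableAt)
          fun w hw => by simp [(hline w hw).2]
    _ = g z := by rw [update_eq_self]

theorem eventuallyEq_dslope_update_of_ne {ι : Type*} [DecidableEq ι] {f : (ι → 𝕜) → 𝕜}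
    {p : ι → 𝕜} {i : ι} (hpi : p i ≠ 0) (hf : ∀ᶠ z in 𝓝 p, f (update z i 0) = 0) :
    (fun z => dslope (fun w => f (update z i w)) 0 (z i)) =ᶠ[𝓝 p] fun z => f z / z i := by
  filter_upwards [hf, (continuous_apply i).continuousAt.eventually_ne hpi] with z hz hzi
  rw [dslope_of_ne _ hzi, slope_def_field, update_eq_self, hz, sub_zero, sub_zero]

theorem analytic_divisible_by_coordinate_general
    (n : ℕ) (r : ℝ) (hr : 0 < r)
    (f : (Fin n → ℂ) → ℂ) (i : Fin n)
    (P : Set (Fin n → ℂ))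
    (hP : P = {z : Fin n → ℂ | ∀ k : Fin n, ‖z k‖ < r})
    (hf : AnalyticOnNhd ℂ f P)
    (hvanish : ∀ z ∈ P, z i = 0 → f z = 0) :
    ∃ g : (Fin n → ℂ) → ℂ, AnalyticOnNhd ℂ g P ∧ ∀ z ∈ P, f z = z i * g z := by
  have hP_open : IsOpen P := by
    have hP_ball : P = Metric.ball 0 r := by
      ext z
      simp [hP, pi_norm_lt_iff hr]
    exact hP_ball ▸ Metric.isOpen_ball
  have hslice : ∀ z ∈ P, update z i 0 ∈ P := fun z hz => by
    rw [hP] at hz ⊢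
    intro k
    rcases eq_or_ne k i with rfl | hk
    · simpa using hr
    · simpa [hk] using hz k
  refine ⟨fun z => dslope (fun w => f (update z i w)) 0 (z i), fun p hp => ?_, fun z hz => ?_⟩
  · by_cases hpi : p i = 0
    · obtain ⟨g, hg, hfg⟩ := (hf p hp).exists_analyticAt_eventually_eq_smul
        (ℓ := ContinuousLinearMap.proj i) (e := Pi.single i 1) (by simp)
        (by filter_upwards [hP_open.mem_nhds hp] with z hz hzi
              using hvanish z hz (by simpa [hpi] using hzi))
      exact hg.congr (eventuallyEq_dslope_update hpi
        (hg.eventually_analyticAt.mono fun z hz => hz.differentiableAt)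
        (by simpa [hpi] using hfg)).symm
    · have hquot : AnalyticAt ℂ (fun z => f z / z i) p := (hf p hp).div
        ((ContinuousLinearMap.proj i : (Fin n → ℂ) →L[ℂ] ℂ).analyticAt p) hpi
      exact hquot.congr (eventuallyEq_dslope_update_of_ne hpi (eventually_of_mem
        (hP_open.mem_nhds hp) fun z hz => hvanish _ (hslice z hz) (by simp))).symm
  · have h := sub_smul_dslope (fun w => f (update z i w)) 0 (z i)
    rwa [update_eq_self, hvanish _ (hslice z hz) (by simp), sub_zero, sub_zero, smul_eq_mul,
      eq_comm] at h

/-- Divisibility by a coordinate on a polydisc: if `f` is analytic on the open polydisc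
`P = {z : |z_k| < r for all k}` and vanishes on the slice `{z_i = 0} ∩ P`, then there
is a function `g` analytic on `P` with `f(z) = z_i · g(z)` on `P`. -/
theorem analytic_divisible_by_coordinate
    (n : ℕ) (hn : 1 ≤ n) (r : ℝ) (hr : 0 < r)
    (f : (Fin n → ℂ) → ℂ) (i : Fin n)
    (P : Set (Fin n → ℂ))
    (hP : P = {z : Fin n → ℂ | ∀ k : Fin n, ‖z k‖ < r})
    (hf : AnalyticOnNhd ℂ f P)
    (hvanish : ∀ z ∈ P, z i = 0 → f z = 0) :
    ∃ g : (Fin n → ℂ) → ℂ, AnalyticOnNhd ℂ g P ∧ ∀ z ∈ P, f z = z i * g z :=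
  analytic_divisible_by_coordinate_general n r hr f i P hP hf hvanish
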